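/- arXiv:2508.04617 — 5 statements merged into one kernel-verified Lean document; each statement's English description precedes it below -/
import Mathlib

section
/- Let η₀ > 0, λ > 0 and r > 2 be real numbers. Then for every τ ≥ 0 there exists a unique real number ζ with ζ ≥ η₀ such that τ = ζ · √( (2/λ) · ( (ζ/η₀)^{2/(r−2)} − 1 ) ). (In other words, the algebraic Carreau equation τ = ζ √((2/λ){(ζ/η₀)^{2/(r−2)} − 1}) defines a function ζ = ψ(τ) on ℝ⁺.) -/
/-- Lemma 6.4 of the paper, case `r > 2`: the algebraic Carreau equation
`τ = ζ √((2/λ)((ζ/η₀)^{2/(r−2)} − 1))` has a unique solution `ζ ≥ η₀`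
for every `τ ≥ 0`. -/
theorem carreau_algebraic_eq_unique_solution_r_gt_two
    (η₀ lam r : ℝ) (hη₀ : 0 < η₀) (hlam : 0 < lam) (hr : 2 < r) :
    ∀ τ : ℝ, 0 ≤ τ →
      ∃! ζ : ℝ, η₀ ≤ ζ ∧
        τ = ζ * Real.sqrt ((2 / lam) * ((ζ / η₀) ^ (2 / (r - 2)) - 1)) := by
  set a : ℝ := 2 / (r - 2) with ha_def
  have ha : 0 < a := div_pos two_pos (by linarith)
  set f : ℝ → ℝ := fun ζ => ζ * Real.sqrt ((2 / lam) * ((ζ / η₀) ^ a - 1)) with hf_def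
  have hc : 0 < 2 / lam := div_pos two_pos hlam
  -- basic fact: for ζ ≥ η₀, (ζ/η₀)^a ≥ 1
  have hge1 : ∀ ζ : ℝ, η₀ ≤ ζ → (1 : ℝ) ≤ (ζ / η₀) ^ a := by
    intro ζ hζ
    calc (1 : ℝ) = 1 ^ a := (Real.one_rpow a).symm
    _ ≤ (ζ / η₀) ^ a :=
      Real.rpow_le_rpow zero_le_one ((one_le_div hη₀).mpr hζ) ha.le
  -- strict monotonicity of f on Ici η₀
  have hmono : StrictMonoOn f (Set.Ici η₀) := by
    intro x hx y hy hxy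
    simp only [Set.mem_Ici] at hx hy
    have hy0 : 0 < y := lt_of_lt_of_le hη₀ hy
    have hrpow : (x / η₀) ^ a < (y / η₀) ^ a :=
      Real.rpow_lt_rpow (div_nonneg (le_trans hη₀.le hx) hη₀.le) (by gcongr) ha
    have hinner : (2 / lam) * ((x / η₀) ^ a - 1) < (2 / lam) * ((y / η₀) ^ a - 1) := by
      apply mul_lt_mul_of_pos_left _ hc; linarith
    have hinner0 : 0 ≤ (2 / lam) * ((x / η₀) ^ a - 1) := by
      have := hge1 x hx; exact mul_nonneg hc.le (by linarith)
    have hsq : Real.sqrt ((2 / lam) * ((x / η₀) ^ a - 1)) <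
        Real.sqrt ((2 / lam) * ((y / η₀) ^ a - 1)) :=
      Real.sqrt_lt_sqrt hinner0 hinner
    exact mul_lt_mul' hxy.le hsq (Real.sqrt_nonneg _) hy0
  -- f η₀ = 0
  have hf0 : f η₀ = 0 := by
    simp only [hf_def, div_self hη₀.ne', Real.one_rpow, sub_self, mul_zero,
      Real.sqrt_zero]
  -- continuity of f on any Icc inside Ici η₀
  have hcont : ContinuousOn f (Set.Ici η₀) := by
    apply ContinuousOn.mul continuousOn_id
    apply Real.continuous_sqrt.comp_continuousOn
    apply ContinuousOn.mul continuousOn_const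
    apply ContinuousOn.sub _ continuousOn_const
    apply ContinuousOn.rpow_const (continuousOn_id.div_const η₀)
    intro x hx
    exact Or.inl (ne_of_gt (div_pos (lt_of_lt_of_le hη₀ hx) hη₀))
  intro τ hτ
  -- choose a big point b with f b ≥ τ
  set b : ℝ := max (η₀ * 2 ^ (1 / a)) (Real.sqrt (lam / 2) * τ) with hb_def
  have h2a : (1 : ℝ) ≤ 2 ^ (1 / a) := by
    calc (1 : ℝ) = 1 ^ (1 / a) := (Real.one_rpow _).symm
    _ ≤ 2 ^ (1 / a) := Real.rpow_le_rpow zero_le_one one_le_two (by positivity)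
  have hηb : η₀ ≤ b := le_trans (le_mul_of_one_le_right hη₀.le h2a) (le_max_left _ _)
  have hb0 : 0 ≤ b := le_trans hη₀.le hηb
  have hfb : τ ≤ f b := by
    have h1 : (2 : ℝ) ≤ (b / η₀) ^ a := by
      have hdiv : 2 ^ (1 / a) ≤ b / η₀ := by
        rw [le_div_iff₀ hη₀]
        calc 2 ^ (1 / a) * η₀ = η₀ * 2 ^ (1 / a) := mul_comm _ _
        _ ≤ b := le_max_left _ _
      calc (2 : ℝ) = 2 ^ ((1 / a) * a) := by
            rw [one_div_mul_cancel ha.ne', Real.rpow_one]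
      _ = (2 ^ (1 / a)) ^ a := Real.rpow_mul (by norm_num) _ _
      _ ≤ (b / η₀) ^ a := Real.rpow_le_rpow (by positivity) hdiv ha.le
    have hs : Real.sqrt (2 / lam) ≤
        Real.sqrt ((2 / lam) * ((b / η₀) ^ a - 1)) := by
      apply Real.sqrt_le_sqrt
      nlinarith [hc]
    calc τ = τ * (Real.sqrt (lam / 2) * Real.sqrt (2 / lam)) := by
          rw [← Real.sqrt_mul (by positivity)]
          rw [show lam / 2 * (2 / lam) = 1 by field_simp]
          simp
    _ = (Real.sqrt (lam / 2) * τ) * Real.sqrt (2 / lam) := by ring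
    _ ≤ b * Real.sqrt ((2 / lam) * ((b / η₀) ^ a - 1)) := by
        apply mul_le_mul (le_max_right _ _) hs (Real.sqrt_nonneg _) hb0
    _ = f b := rfl
  -- existence via IVT
  have hivt := intermediate_value_Icc hηb (hcont.mono Set.Icc_subset_Ici_self)
  have hmem : τ ∈ Set.Icc (f η₀) (f b) := by rw [hf0]; exact ⟨hτ, hfb⟩
  obtain ⟨ζ, hζmem, hζeq⟩ := hivt hmem
  refine ⟨ζ, ⟨hζmem.1, hζeq.symm⟩, ?_⟩
  rintro ζ' ⟨hζ'1, hζ'2⟩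
  exact hmono.injOn (Set.mem_Ici.mpr hζ'1) (Set.mem_Ici.mpr hζmem.1)
    (hζ'2.symm.trans hζeq.symm)
end

section
/- Let η₀ > 0, λ > 0 and r with 1 < r < 2 be real numbers. Then for every τ ≥ 0 there exists a unique real number ζ with 0 < ζ ≤ η₀ such that τ = ζ · √( (2/λ) · ( (ζ/η₀)^{2/(r−2)} − 1 ) ). (In other words, the algebraic Carreau equation τ = ζ √((2/λ){(ζ/η₀)^{2/(r−2)} − 1}) defines a function ζ = ψ(τ) on ℝ⁺.) -/
/-- Lemma 6.4 of the paper, case `1 < r < 2`: the algebraic Carreau equation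
`τ = ζ √((2/λ)((ζ/η₀)^{2/(r−2)} − 1))` has a unique solution `0 < ζ ≤ η₀`
for every `τ ≥ 0`. -/
theorem carreau_algebraic_eq_unique_solution_r_lt_two
    (η₀ lam r : ℝ) (hη₀ : 0 < η₀) (hlam : 0 < lam) (hr1 : 1 < r) (hr2 : r < 2) :
    ∀ τ : ℝ, 0 ≤ τ →
      ∃! ζ : ℝ, (0 < ζ ∧ ζ ≤ η₀) ∧
        τ = ζ * Real.sqrt ((2 / lam) * ((ζ / η₀) ^ (2 / (r - 2)) - 1)) := by
  intro τ hτ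
  have hrneg : r - 2 < 0 := by linarith
  set a : ℝ := 2 / (r - 2) with ha
  have haneg : a < -2 := by
    rw [ha, div_lt_iff_of_neg hrneg]; nlinarith
  have hb : a + 2 < 0 := by linarith
  have hbne : a + 2 ≠ 0 := ne_of_lt hb
  set c1 : ℝ := (2 / lam) * η₀ ^ (-a) with hc1
  have hc1pos : 0 < c1 := mul_pos (by positivity) (Real.rpow_pos_of_pos hη₀ _)
  set h : ℝ → ℝ := fun ζ => c1 * ζ ^ (a + 2) - (2 / lam) * ζ ^ (2 : ℕ) with hh
  -- key algebraic identity
  have key : ∀ ζ : ℝ, 0 < ζ →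
      ζ ^ (2 : ℕ) * ((2 / lam) * ((ζ / η₀) ^ a - 1)) = h ζ := by
    intro ζ hζ
    have h1 : (ζ / η₀) ^ a = ζ ^ a * η₀ ^ (-a) := by
      rw [Real.div_rpow hζ.le hη₀.le, Real.rpow_neg hη₀.le, div_eq_mul_inv]
    have h2 : (ζ : ℝ) ^ (2 : ℕ) * ζ ^ a = ζ ^ (a + 2) := by
      rw [← Real.rpow_natCast ζ 2, ← Real.rpow_add hζ]
      norm_num [add_comm]
    simp only [hh, hc1]
    rw [h1, ← h2]
    ring
  -- h is strictly decreasing on positive reals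
  have hanti : ∀ x y : ℝ, 0 < x → x < y → h y < h x := by
    intro x y hx hxy
    have h1 : y ^ (a + 2) < x ^ (a + 2) := Real.rpow_lt_rpow_of_neg hx hxy hb
    have h2 : x ^ (2 : ℕ) < y ^ (2 : ℕ) := by nlinarith
    have h3 := mul_lt_mul_of_pos_left h1 hc1pos
    have h4 := mul_lt_mul_of_pos_left h2 (show (0:ℝ) < 2 / lam by positivity)
    simp only [hh]
    linarith
  -- h η₀ = 0
  have hη0zero : h η₀ = 0 := by
    have : c1 * η₀ ^ (a + 2) = (2 / lam) * η₀ ^ (2 : ℕ) := by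
      rw [hc1, mul_assoc, ← Real.rpow_add hη₀,
        show (-a + (a + 2)) = (((2:ℕ):ℝ)) by push_cast; ring, Real.rpow_natCast]
    simp only [hh]
    linarith
  -- rewrite the equation via h
  have heq : ∀ ζ : ℝ, 0 < ζ → ζ ≤ η₀ →
      ζ * Real.sqrt ((2 / lam) * ((ζ / η₀) ^ a - 1)) = Real.sqrt (h ζ) := by
    intro ζ hζ hζη
    have hs := Real.sqrt_mul (sq_nonneg ζ) ((2 / lam) * ((ζ / η₀) ^ a - 1))
    rw [Real.sqrt_sq hζ.le] at hs
    rw [← key ζ hζ, hs]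
  -- h is nonnegative on (0, η₀]
  have hnn : ∀ ζ : ℝ, 0 < ζ → ζ ≤ η₀ → 0 ≤ h ζ := by
    intro ζ hζ hζη
    rcases eq_or_lt_of_le hζη with rfl | hlt
    · exact le_of_eq hη0zero.symm
    · have := hanti ζ η₀ hζ hlt
      linarith [hη0zero]
  -- existence: find δ > 0 with h δ ≥ τ²
  set M : ℝ := τ ^ (2 : ℕ) + (2 / lam) * η₀ ^ (2 : ℕ) with hM
  have hMpos : 0 < M := by positivity
  set δ : ℝ := min η₀ ((M / c1) ^ ((a + 2)⁻¹)) with hδ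
  have hδpos : 0 < δ :=
    lt_min hη₀ (Real.rpow_pos_of_pos (by positivity) _)
  have hδη : δ ≤ η₀ := min_le_left _ _
  have hδbig : τ ^ (2 : ℕ) ≤ h δ := by
    have hδle : δ ≤ (M / c1) ^ ((a + 2)⁻¹) := min_le_right _ _
    have h1 : ((M / c1) ^ ((a + 2)⁻¹)) ^ (a + 2) ≤ δ ^ (a + 2) :=
      Real.rpow_le_rpow_of_nonpos hδpos hδle hb.le
    have h2 : ((M / c1) ^ ((a + 2)⁻¹)) ^ (a + 2) = M / c1 := by
      rw [← Real.rpow_mul (by positivity : (0:ℝ) ≤ M / c1),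
        inv_mul_cancel₀ hbne, Real.rpow_one]
    have h3 : M ≤ c1 * δ ^ (a + 2) := by
      rw [h2] at h1
      calc M = c1 * (M / c1) := by field_simp
        _ ≤ c1 * δ ^ (a + 2) := by
            exact mul_le_mul_of_nonneg_left h1 hc1pos.le
    have h4 : (2 / lam) * δ ^ (2 : ℕ) ≤ (2 / lam) * η₀ ^ (2 : ℕ) := by
      have h5 : δ ^ (2 : ℕ) ≤ η₀ ^ (2 : ℕ) := by nlinarith
      exact mul_le_mul_of_nonneg_left h5 (by positivity)
    simp only [hh]
    simp only [hM] at h3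
    linarith
  -- IVT on [δ, η₀]
  have hcont : ContinuousOn h (Set.Icc δ η₀) := by
    have c1' : ContinuousOn (fun x : ℝ => x ^ (a + 2)) (Set.Icc δ η₀) := fun x hx =>
      (Real.continuousAt_rpow_const x (a + 2)
        (Or.inl (ne_of_gt (lt_of_lt_of_le hδpos hx.1)))).continuousWithinAt
    simp only [hh]
    exact (continuousOn_const.mul c1').sub
      (continuousOn_const.mul ((continuous_pow 2).continuousOn))
  have hmem : τ ^ (2 : ℕ) ∈ Set.Icc (h η₀) (h δ) := by
    rw [hη0zero]
    exact ⟨by positivity, hδbig⟩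
  obtain ⟨ζ, hζmem, hζeq⟩ := intermediate_value_Icc' hδη hcont hmem
  have hζpos : 0 < ζ := lt_of_lt_of_le hδpos hζmem.1
  have hζη : ζ ≤ η₀ := hζmem.2
  refine ⟨ζ, ⟨⟨hζpos, hζη⟩, ?_⟩, ?_⟩
  · rw [heq ζ hζpos hζη, hζeq]
    exact (Real.sqrt_sq hτ).symm
  · rintro ζ' ⟨⟨hp, hle⟩, heq'⟩
    have h1 : τ = Real.sqrt (h ζ') := by rw [heq'] ; exact heq ζ' hp hle
    have h2 : h ζ' = τ ^ (2 : ℕ) := by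
      rw [h1, Real.sq_sqrt (hnn ζ' hp hle)]
    have h3 : h ζ' = h ζ := by rw [h2, hζeq]
    rcases lt_trichotomy ζ' ζ with hlt | heqz | hgt
    · exact absurd h3 (ne_of_gt (hanti ζ' ζ hp hlt))
    · exact heqz
    · exact absurd h3 (ne_of_lt (hanti ζ ζ' hζpos hgt))
end

section
/- Let η₀ > 0, λ > 0 and r > 2 be real numbers, and define g_r : ℝ² → ℝ² by g_r(z) = η₀ (1 + (λ/2)|z|²)^{(r−2)/2} z, where |·| is the Euclidean norm on ℝ². Then there exists a constant C_r > 0, depending only on η₀, λ and r, such that for all z, t ∈ ℝ²: ( g_r(z) − g_r(t) , z − t ) ≥ C_r |z − t|², where (·,·) denotes the Euclidean inner product on ℝ². -/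
open scoped RealInnerProductSpace

/-- Inequality (6.45)₁ of the paper: strong monotonicity of the Carreau
nonlinearity `g_r(z) = η₀ (1 + (λ/2)|z|²)^{(r−2)/2} z` for `r > 2`. -/
theorem carreau_nonlinearity_strongly_monotone_r_gt_two
    (η₀ lam r : ℝ) (hη₀ : 0 < η₀) (hlam : 0 < lam) (hr : 2 < r) :
    ∃ C : ℝ, 0 < C ∧
      ∀ z t : EuclideanSpace ℝ (Fin 2),
        (⟪(η₀ * (1 + (lam / 2) * ‖z‖ ^ 2) ^ ((r - 2) / 2)) • z
            - (η₀ * (1 + (lam / 2) * ‖t‖ ^ 2) ^ ((r - 2) / 2)) • t, z - t⟫)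
          ≥ C * ‖z - t‖ ^ 2 := by
  refine ⟨η₀, hη₀, fun z t => ?_⟩
  have hα : (0:ℝ) ≤ (r - 2) / 2 := by linarith
  set a : ℝ := η₀ * (1 + (lam / 2) * ‖z‖ ^ 2) ^ ((r - 2) / 2) with ha_def
  set b : ℝ := η₀ * (1 + (lam / 2) * ‖t‖ ^ 2) ^ ((r - 2) / 2) with hb_def
  have hbase : ∀ v : EuclideanSpace ℝ (Fin 2), (1:ℝ) ≤ 1 + (lam / 2) * ‖v‖ ^ 2 := by
    intro v
    nlinarith [sq_nonneg (‖v‖), hlam.le]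
  have hpow1 : ∀ v : EuclideanSpace ℝ (Fin 2),
      (1:ℝ) ≤ (1 + (lam / 2) * ‖v‖ ^ 2) ^ ((r - 2) / 2) := by
    intro v
    exact Real.one_le_rpow (hbase v) hα
  have ha : η₀ ≤ a := by
    have := hpow1 z
    nlinarith [hη₀.le]
  have hb : η₀ ≤ b := by
    have := hpow1 t
    nlinarith [hη₀.le]
  -- monotonicity: (‖z‖ - ‖t‖) and (a - b) have the same sign
  have hmono : 0 ≤ (‖z‖ - ‖t‖) * (a - b) := by
    rcases le_total ‖z‖ ‖t‖ with h | h
    · have hab : a ≤ b := by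
        have : (1 + (lam / 2) * ‖z‖ ^ 2) ^ ((r - 2) / 2)
            ≤ (1 + (lam / 2) * ‖t‖ ^ 2) ^ ((r - 2) / 2) := by
          apply Real.rpow_le_rpow (by linarith [hbase z]) _ hα
          nlinarith [mul_le_mul h h (norm_nonneg z) (norm_nonneg t), hlam.le]
        nlinarith [hη₀.le]
      nlinarith [mul_nonneg (sub_nonneg.2 h) (sub_nonneg.2 hab)]
    · have hab : b ≤ a := by
        have : (1 + (lam / 2) * ‖t‖ ^ 2) ^ ((r - 2) / 2)
            ≤ (1 + (lam / 2) * ‖z‖ ^ 2) ^ ((r - 2) / 2) := by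
          apply Real.rpow_le_rpow (by linarith [hbase t]) _ hα
          nlinarith [mul_le_mul h h (norm_nonneg t) (norm_nonneg z), hlam.le]
        nlinarith [hη₀.le]
      exact mul_nonneg (by linarith) (by linarith)
  have hexpand : ⟪a • z - b • t, z - t⟫
      = a * ‖z‖ ^ 2 + b * ‖t‖ ^ 2 - (a + b) * ⟪z, t⟫ := by
    simp only [inner_sub_left, inner_sub_right, real_inner_smul_left,
      real_inner_self_eq_norm_sq, real_inner_comm t z]
    try ring
  have hnorm : ‖z - t‖ ^ 2 = ‖z‖ ^ 2 - 2 * ⟪z, t⟫ + ‖t‖ ^ 2 := by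
    rw [norm_sub_sq_real]
  have hcs : ⟪z, t⟫ ≤ ‖z‖ * ‖t‖ := real_inner_le_norm z t
  rw [hexpand, hnorm]
  nlinarith [norm_nonneg z, norm_nonneg t, hmono, hcs, ha, hb,
    mul_nonneg (mul_nonneg (sub_nonneg.2 ha) (norm_nonneg z)) (norm_nonneg z),
    mul_nonneg (sub_nonneg.2 ha) (sub_nonneg.2 hcs),
    mul_nonneg (sub_nonneg.2 hb) (sub_nonneg.2 hcs),
    mul_nonneg hmono (sq_nonneg (‖z‖ - ‖t‖)),
    mul_nonneg (sub_nonneg.2 hb) (sq_nonneg (‖z‖ - ‖t‖))]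
end

section
/- Let η₀ > 0, λ > 0 and r with 1 < r < 2 be real numbers, and define g_r : ℝ² → ℝ² by g_r(z) = η₀ (1 + (λ/2)|z|²)^{(r−2)/2} z, where |·| is the Euclidean norm on ℝ². Then there exists a constant C̄_r > 0, depending only on η₀, λ and r, such that for all z, t ∈ ℝ²: ( g_r(z) − g_r(t) , z − t ) ≥ C̄_r |z − t|² / (1 + |t|^{2−r} + |z|^{2−r}), where (·,·) denotes the Euclidean inner product on ℝ². -/
/-!
Write `g(z) = (1 + μ|z|²)^p z` with `μ = λ/2` and `p = (r - 2)/2 ∈ (-1/2, 0)`. Along the segment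
`w(s) = t + s(z - t)` the derivative of `s ↦ (g(w(s)), z - t)` is
`u^p |v|² + 2μp u^(p-1) (w, v)²` with `u = 1 + μ|w|²` and `v = z - t`; by Cauchy–Schwarz it is at
least `(1 + 2p) u^p |v|² = (r - 1) u^p |v|²`. As `|w| ≤ |z| + |t|` and `p < 0`, the mean value
theorem gives `(g(z) - g(t), z - t) ≥ (r - 1)(1 + μ(|z| + |t|)²)^p |z - t|²`, and subadditivity
of `x ↦ x^q` for `0 ≤ q ≤ 1` bounds `(1 + μ(|z| + |t|)²)^(-p)` by
`max(1, μ^(-p)) (1 + |t|^(2-r) + |z|^(2-r))`.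
-/

open scoped RealInnerProductSpace

noncomputable def carreauField {E : Type*} [NormedAddCommGroup E] [InnerProductSpace ℝ E]
    (μ p : ℝ) (z : E) : E :=
  (1 + μ * ‖z‖ ^ 2) ^ p • z

section

variable {E : Type*} [NormedAddCommGroup E] [InnerProductSpace ℝ E] {μ p : ℝ}

theorem hasDerivAt_inner_carreauField_line (hμ : 0 ≤ μ) (t v : E) (s : ℝ) :
    HasDerivAt (fun s : ℝ => ⟪carreauField μ p (t + s • v), v⟫)
      ((1 + μ * ‖t + s • v‖ ^ 2) ^ p * ‖v‖ ^ 2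
        + 2 * μ * p * (1 + μ * ‖t + s • v‖ ^ 2) ^ (p - 1) * ⟪t + s • v, v⟫ ^ 2) s := by
  have hline : HasDerivAt (fun s : ℝ => t + s • v) v s := by
    simpa using ((hasDerivAt_id s).smul_const v).const_add t
  have hweight := (((hline.norm_sq).const_mul μ).const_add 1).rpow_const (p := p)
    (Or.inl (by positivity : 0 < 1 + μ * ‖t + s • v‖ ^ 2).ne')
  have hinner : HasDerivAt (fun s : ℝ => ⟪t + s • v, v⟫) (‖v‖ ^ 2) s := by
    simpa [real_inner_self_eq_norm_sq] using hline.inner ℝ (hasDerivAt_const s v)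
  simp only [carreauField, real_inner_smul_left]
  exact (hweight.mul hinner).congr_deriv (by ring)

theorem mul_rpow_mul_norm_sq_le_carreau_deriv (hμ : 0 ≤ μ) (hp : p ≤ 0) (w v : E) :
    (1 + 2 * p) * (1 + μ * ‖w‖ ^ 2) ^ p * ‖v‖ ^ 2 ≤
      (1 + μ * ‖w‖ ^ 2) ^ p * ‖v‖ ^ 2
        + 2 * μ * p * (1 + μ * ‖w‖ ^ 2) ^ (p - 1) * ⟪w, v⟫ ^ 2 := by
  set u := 1 + μ * ‖w‖ ^ 2
  have hu : 0 < u := by positivity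
  have hpow : u ^ p = u ^ (p - 1) * u := by
    rw [← Real.rpow_add_one hu.ne']; ring_nf
  have hcs : ⟪w, v⟫ ^ 2 ≤ (‖w‖ * ‖v‖) ^ 2 :=
    sq_le_sq.2 ((abs_real_inner_le_norm w v).trans (le_abs_self _))
  -- the right side minus the left side is `-2p u^(p-1) (u ‖v‖² - μ ⟪w, v⟫²)`
  have hgap : 0 ≤ u * ‖v‖ ^ 2 - μ * ⟪w, v⟫ ^ 2 := by nlinarith [sq_nonneg ‖v‖]
  have := mul_nonneg (mul_nonneg (neg_nonneg.2 hp) (Real.rpow_nonneg hu.le (p - 1))) hgap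
  rw [hpow]
  nlinarith

theorem norm_add_smul_sub_le {s : ℝ} (hs : s ∈ Set.Icc (0 : ℝ) 1) (z t : E) :
    ‖t + s • (z - t)‖ ≤ ‖z‖ + ‖t‖ := by
  have h := (convexOn_norm convex_univ).2 (x := t) (y := z) trivial trivial
    (sub_nonneg.2 hs.2) hs.1 (sub_add_cancel 1 s)
  rw [show (1 - s) • t + s • z = t + s • (z - t) by module, smul_eq_mul, smul_eq_mul] at h
  nlinarith [hs.1, hs.2, norm_nonneg z, norm_nonneg t]

theorem mul_norm_sub_sq_le_inner_carreauField_sub (hμ : 0 ≤ μ) (hp : p ≤ 0)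
    (hp' : 0 ≤ 1 + 2 * p) (z t : E) :
    (1 + 2 * p) * (1 + μ * (‖z‖ + ‖t‖) ^ 2) ^ p * ‖z - t‖ ^ 2 ≤
      ⟪carreauField μ p z - carreauField μ p t, z - t⟫ := by
  set φ := fun s : ℝ => ⟪carreauField μ p (t + s • (z - t)), z - t⟫
  have hderiv := hasDerivAt_inner_carreauField_line (p := p) hμ t (z - t)
  have hφ : Differentiable ℝ φ := fun s => (hderiv s).differentiableAt
  have hmvt := (convex_Icc (0 : ℝ) 1).mul_sub_le_image_sub_of_le_deriv
    (C := (1 + 2 * p) * (1 + μ * (‖z‖ + ‖t‖) ^ 2) ^ p * ‖z - t‖ ^ 2)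
    hφ.continuous.continuousOn hφ.differentiableOn ?_
    0 (Set.left_mem_Icc.2 zero_le_one) 1 (Set.right_mem_Icc.2 zero_le_one) zero_le_one
  · simpa [φ, inner_sub_left] using hmvt
  · intro s hs
    rw [(hderiv s).deriv]
    refine le_trans ?_ (mul_rpow_mul_norm_sq_le_carreau_deriv hμ hp _ _)
    have := norm_add_smul_sub_le (interior_subset hs) z t
    gcongr _ * ?_ * _
    exact Real.rpow_le_rpow_of_nonpos (by positivity) (by gcongr) hp

end

theorem one_add_mul_add_sq_rpow_le {μ s a b : ℝ} (hμ : 0 ≤ μ) (hs0 : 0 ≤ s) (hs1 : s ≤ 1)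
    (ha : 0 ≤ a) (hb : 0 ≤ b) :
    (1 + μ * (a + b) ^ 2) ^ (s / 2) ≤ max 1 (μ ^ (s / 2)) * (1 + b ^ s + a ^ s) := by
  have hsq : ((a + b) ^ 2) ^ (s / 2) = (a + b) ^ s := by
    rw [← Real.rpow_natCast, ← Real.rpow_mul (by positivity)]
    ring_nf
  calc (1 + μ * (a + b) ^ 2) ^ (s / 2) ≤ 1 ^ (s / 2) + (μ * (a + b) ^ 2) ^ (s / 2) :=
        Real.rpow_add_le_add_rpow zero_le_one (by positivity) (by linarith) (by linarith)
    _ = 1 + μ ^ (s / 2) * (a + b) ^ s := by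
        rw [Real.one_rpow, Real.mul_rpow hμ (by positivity), hsq]
    _ ≤ 1 + μ ^ (s / 2) * (a ^ s + b ^ s) := by
        gcongr
        exact Real.rpow_add_le_add_rpow ha hb hs0 hs1
    _ ≤ max 1 (μ ^ (s / 2)) + max 1 (μ ^ (s / 2)) * (a ^ s + b ^ s) := by
        gcongr
        exacts [le_max_left _ _, le_max_right _ _]
    _ = max 1 (μ ^ (s / 2)) * (1 + b ^ s + a ^ s) := by ring

/-- Inequality (6.45)₂ of the paper: monotonicity of the Carreau nonlinearity
`g_r(z) = η₀ (1 + (λ/2)|z|²)^{(r−2)/2} z` for `1 < r < 2`. -/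
theorem carreau_nonlinearity_monotone_r_lt_two
    (η₀ lam r : ℝ) (hη₀ : 0 < η₀) (hlam : 0 < lam) (hr1 : 1 < r) (hr2 : r < 2) :
    ∃ C : ℝ, 0 < C ∧
      ∀ z t : EuclideanSpace ℝ (Fin 2),
        (⟪(η₀ * (1 + (lam / 2) * ‖z‖ ^ 2) ^ ((r - 2) / 2)) • z
            - (η₀ * (1 + (lam / 2) * ‖t‖ ^ 2) ^ ((r - 2) / 2)) • t, z - t⟫)
          ≥ C * ‖z - t‖ ^ 2 / (1 + ‖t‖ ^ (2 - r) + ‖z‖ ^ (2 - r)) := by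
  set K : ℝ := max 1 ((lam / 2) ^ ((2 - r) / 2))
  have hK : 0 < K := lt_max_of_lt_left one_pos
  have hr : 0 < r - 1 := sub_pos.2 hr1
  refine ⟨η₀ * (r - 1) / K, by positivity, fun z t => ?_⟩
  have hfactor : ⟪(η₀ * (1 + (lam / 2) * ‖z‖ ^ 2) ^ ((r - 2) / 2)) • z
      - (η₀ * (1 + (lam / 2) * ‖t‖ ^ 2) ^ ((r - 2) / 2)) • t, z - t⟫ =
      η₀ * ⟪carreauField (lam / 2) ((r - 2) / 2) z - carreauField (lam / 2) ((r - 2) / 2) t,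
        z - t⟫ := by
    simp only [carreauField, inner_sub_left, real_inner_smul_left]
    ring
  have hmono := mul_norm_sub_sq_le_inner_carreauField_sub (μ := lam / 2) (p := (r - 2) / 2)
    (by positivity) (by linarith) (by linarith) z t
  have hweight := one_add_mul_add_sq_rpow_le (μ := lam / 2) (s := 2 - r) (by positivity)
    (by linarith) (by linarith) (norm_nonneg z) (norm_nonneg t)
  set U := 1 + lam / 2 * (‖z‖ + ‖t‖) ^ 2
  have hU : 0 < U := by positivity
  have hpow : U ^ ((r - 2) / 2) = (U ^ ((2 - r) / 2))⁻¹ := by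
    rw [← Real.rpow_neg hU.le]
    ring_nf
  rw [hfactor, ge_iff_le]
  calc η₀ * (r - 1) / K * ‖z - t‖ ^ 2 / (1 + ‖t‖ ^ (2 - r) + ‖z‖ ^ (2 - r))
      = η₀ * ((r - 1) * ‖z - t‖ ^ 2 / (K * (1 + ‖t‖ ^ (2 - r) + ‖z‖ ^ (2 - r)))) := by
        field_simp
    _ ≤ η₀ * ((r - 1) * ‖z - t‖ ^ 2 / U ^ ((2 - r) / 2)) := by gcongr
    _ = η₀ * ((1 + 2 * ((r - 2) / 2)) * U ^ ((r - 2) / 2) * ‖z - t‖ ^ 2) := by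
        rw [hpow]
        ring
    _ ≤ _ := by gcongr
end

section
/- Let (Ω, μ) be a measure space with 0 < μ(Ω) < ∞, let 1 < r < 2 and c > 0 be real numbers. Then there exist constants α₁ > 0 and α₂ > 0, depending only on r, c and μ(Ω), such that for every measurable function f : Ω → [0, ∞) with ∫_Ω f^r dμ < ∞, one has ∫_Ω f² / (1 + c f^{2−r}) dμ ≥ α₁ S² / (1 + α₂ S^{2−r}), where S = ( ∫_Ω f^r dμ )^{1/r}. -/
/-!
With `a = 2 / r ∈ (1, 2)` the integrand is `ψ (f ^ r)` for `ψ s = s ^ a / (1 + c s ^ (a - 1))`.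
The derivative `s ^ (a - 1) (a + c s ^ (a - 1)) / (1 + c s ^ (a - 1)) ^ 2` of `ψ` is increasing
because `u ↦ u (a + c u) / (1 + c u) ^ 2` is, as long as `a ≤ 2`; so `ψ` is convex on
`[0, ∞)`. Jensen's inequality for the normalised measure gives
`∫ ψ (f ^ r) ≥ μ(Ω) ψ (S ^ r / μ(Ω))`, and writing `S ^ r / μ(Ω) = (S μ(Ω) ^ (-1/r)) ^ r`
evaluates the right-hand side to `α₁ S ^ 2 / (1 + c α₁ S ^ (2 - r))` with `α₁ = μ(Ω) ^ (1 - 2 / r)`.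
-/

open MeasureTheory Set

noncomputable def carreauPotential (a c s : ℝ) : ℝ :=
  s ^ a / (1 + c * s ^ (a - 1))

section carreauPotential

variable {a c : ℝ}

theorem carreauPotential_rpow {r : ℝ} (hr : r ≠ 0) {t : ℝ} (ht : 0 ≤ t) :
    carreauPotential (2 / r) c (t ^ r) = t ^ 2 / (1 + c * t ^ (2 - r)) := by
  have hsq : (t ^ r) ^ (2 / r) = t ^ 2 := by
    rw [← Real.rpow_mul ht, mul_div_cancel₀ _ hr, Real.rpow_two]
  have hpow : (t ^ r) ^ (2 / r - 1) = t ^ (2 - r) := by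
    rw [← Real.rpow_mul ht]
    congr 1
    field_simp
  rw [carreauPotential, hsq, hpow]

theorem carreauPotential_nonneg (hc : 0 ≤ c) {s : ℝ} (hs : 0 ≤ s) :
    0 ≤ carreauPotential a c s := by
  unfold carreauPotential
  have := Real.rpow_nonneg hs (a - 1)
  positivity

theorem carreauPotential_le (ha : 0 < a) (hc : 0 < c) {s : ℝ} (hs : 0 ≤ s) :
    carreauPotential a c s ≤ s / c := by
  rcases hs.eq_or_lt with rfl | hs
  · simp [carreauPotential, Real.zero_rpow ha.ne']
  have hsa : s ^ a = s * s ^ (a - 1) := by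
    rw [← Real.rpow_one_add' hs.le (by linarith), add_sub_cancel]
  have hpos : 0 < s ^ (a - 1) := Real.rpow_pos_of_pos hs _
  rw [carreauPotential, hsa, div_le_div_iff₀ (by positivity) hc]
  nlinarith [mul_pos hs hpos]

theorem measurable_carreauPotential : Measurable (carreauPotential a c) := by
  unfold carreauPotential
  fun_prop

theorem continuousOn_carreauPotential (ha : 1 ≤ a) (hc : 0 ≤ c) :
    ContinuousOn (carreauPotential a c) (Ici 0) := by
  intro s hs
  have hden : 0 < 1 + c * s ^ (a - 1) := by
    have := Real.rpow_nonneg (show (0 : ℝ) ≤ s from hs) (a - 1)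
    positivity
  exact ((Real.continuousAt_rpow_const s a (Or.inr (by linarith))).div
    (continuousAt_const.add (continuousAt_const.mul
      (Real.continuousAt_rpow_const s (a - 1) (Or.inr (by linarith))))) hden.ne')
    |>.continuousWithinAt

theorem hasDerivAt_carreauPotential (hc : 0 ≤ c) {s : ℝ} (hs : 0 < s) :
    HasDerivAt (carreauPotential a c)
      (s ^ (a - 1) * (a + c * s ^ (a - 1)) / (1 + c * s ^ (a - 1)) ^ 2) s := by
  have hden : 1 + c * s ^ (a - 1) ≠ 0 := by
    have := Real.rpow_nonneg hs.le (a - 1)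
    positivity
  have hpow : s ^ a * s ^ (a - 1 - 1) = s ^ (a - 1) * s ^ (a - 1) := by
    rw [← Real.rpow_add hs, ← Real.rpow_add hs]
    ring_nf
  refine ((Real.hasDerivAt_rpow_const (Or.inl hs.ne')).div
    (((Real.hasDerivAt_rpow_const (Or.inl hs.ne')).const_mul c).const_add 1) hden).congr_deriv ?_
  rw [div_left_inj' (pow_ne_zero 2 hden)]
  linear_combination (-c * (a - 1)) * hpow

theorem monotoneOn_mul_add_div_one_add_sq (ha₀ : 0 ≤ a) (ha₂ : a ≤ 2) (hc : 0 ≤ c) :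
    MonotoneOn (fun u : ℝ => u * (a + c * u) / (1 + c * u) ^ 2) (Ici 0) := by
  intro u hu v hv huv
  simp only [mem_Ici] at hu hv
  rw [div_le_div_iff₀ (by positivity) (by positivity)]
  -- the difference of the two sides is `(v - u) (a + c (u + v) + (2 - a) c ^ 2 u v)`
  have hd := sub_nonneg.2 huv
  have hcuv := mul_nonneg (mul_nonneg hc hc) (mul_nonneg hu hv)
  nlinarith [mul_nonneg hd ha₀, mul_nonneg hd (mul_nonneg hc (add_nonneg hu hv)),
    mul_nonneg hd (mul_nonneg (sub_nonneg.2 ha₂) hcuv)]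

theorem convexOn_carreauPotential (ha₁ : 1 ≤ a) (ha₂ : a ≤ 2) (hc : 0 ≤ c) :
    ConvexOn ℝ (Ici 0) (carreauPotential a c) := by
  refine MonotoneOn.convexOn_of_deriv (convex_Ici 0) (continuousOn_carreauPotential ha₁ hc)
    ?_ ?_ <;> rw [interior_Ici]
  · exact fun s hs => (hasDerivAt_carreauPotential hc hs).differentiableAt.differentiableWithinAt
  · intro s hs t ht hst
    rw [(hasDerivAt_carreauPotential hc hs).deriv, (hasDerivAt_carreauPotential hc ht).deriv]
    exact monotoneOn_mul_add_div_one_add_sq (by linarith) ha₂ hc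
      (Real.rpow_nonneg hs.le _) (Real.rpow_nonneg ht.le _)
      (Real.rpow_le_rpow hs.le hst (by linarith))

theorem mul_carreauPotential_div {r M T : ℝ} (hr : 0 < r) (hM : 0 < M) (hT : 0 ≤ T) :
    M * carreauPotential (2 / r) c (T / M) =
      M ^ (1 - 2 / r) * (T ^ (1 / r)) ^ 2 /
        (1 + c * M ^ (1 - 2 / r) * (T ^ (1 / r)) ^ (2 - r)) := by
  set S := T ^ (1 / r)
  have hS : 0 ≤ S := Real.rpow_nonneg hT _
  have hm : 0 ≤ M ^ (-1 / r) := Real.rpow_nonneg hM.le _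
  have hmpow : ∀ p : ℝ, (M ^ (-1 / r)) ^ p = M ^ (-p / r) := fun p => by
    rw [← Real.rpow_mul hM.le]; ring_nf
  have hTM : T / M = (S * M ^ (-1 / r)) ^ r := by
    rw [Real.mul_rpow hS hm, hmpow, ← Real.rpow_mul hT, one_div_mul_cancel hr.ne', Real.rpow_one,
      neg_div_self hr.ne', Real.rpow_neg_one, div_eq_mul_inv]
  have hM2 : M * (M ^ (-1 / r)) ^ 2 = M ^ (1 - 2 / r) := by
    rw [← Real.rpow_two, hmpow, sub_eq_add_neg, Real.rpow_add hM, Real.rpow_one, neg_div]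
  have hM2r : (M ^ (-1 / r)) ^ (2 - r) = M ^ (1 - 2 / r) := by
    rw [hmpow]; congr 1; field_simp; ring
  rw [hTM, carreauPotential_rpow hr.ne' (mul_nonneg hS hm), Real.mul_rpow hS hm, hM2r, mul_pow,
    ← mul_div_assoc, ← mul_assoc, mul_comm M, mul_assoc, hM2]
  ring_nf

variable {Ω : Type*} [MeasurableSpace Ω] {μ : Measure Ω}

theorem integrable_carreauPotential_comp (ha : 0 < a) (hc : 0 < c) {g : Ω → ℝ}
    (hg : Integrable g μ) (hg₀ : ∀ᵐ x ∂μ, 0 ≤ g x) :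
    Integrable (fun x => carreauPotential a c (g x)) μ := by
  refine (hg.div_const c).mono'
    (measurable_carreauPotential.comp_aemeasurable hg.aemeasurable).aestronglyMeasurable ?_
  filter_upwards [hg₀] with x hx
  rw [Real.norm_of_nonneg (carreauPotential_nonneg hc.le hx)]
  exact carreauPotential_le ha hc hx

theorem measureReal_univ_mul_carreauPotential_le_integral [IsFiniteMeasure μ] [NeZero μ]
    (ha₁ : 1 ≤ a) (ha₂ : a ≤ 2) (hc : 0 < c) {g : Ω → ℝ} (hg : Integrable g μ)
    (hg₀ : ∀ᵐ x ∂μ, 0 ≤ g x) :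
    μ.real univ * carreauPotential a c ((∫ x, g x ∂μ) / μ.real univ) ≤
      ∫ x, carreauPotential a c (g x) ∂μ := by
  have hμ : μ.real univ ≠ 0 := (measureReal_univ_pos).ne'
  have jensen := (convexOn_carreauPotential ha₁ ha₂ hc.le).map_average_le
    (continuousOn_carreauPotential ha₁ hc.le) isClosed_Ici hg₀ hg
    (integrable_carreauPotential_comp (by linarith) hc hg hg₀)
  rw [average_eq, average_eq, smul_eq_mul, smul_eq_mul, inv_mul_eq_div] at jensen
  calc μ.real univ * carreauPotential a c ((∫ x, g x ∂μ) / μ.real univ)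
      ≤ μ.real univ * ((μ.real univ)⁻¹ * ∫ x, carreauPotential a c (g x) ∂μ) :=
        mul_le_mul_of_nonneg_left jensen measureReal_nonneg
    _ = ∫ x, carreauPotential a c (g x) ∂μ := mul_inv_cancel_left₀ hμ _

end carreauPotential

/-- Jensen-type inequality used in the proof of Lemma 5.2 of the paper
(cited there from [4, Proposition 3.1]): on a finite measure space, for
`1 < r < 2` and `c > 0` there are `α₁, α₂ > 0` such that for every nonnegative
measurable `f` with `f^r` integrable,
`∫ f²/(1 + c f^{2−r}) ≥ α₁ S² / (1 + α₂ S^{2−r})` where `S = (∫ f^r)^{1/r}`. -/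
theorem jensen_type_carreau_lower_bound
    {Ω : Type*} [MeasurableSpace Ω] (μ : Measure Ω)
    (hμ0 : 0 < μ Set.univ) (hμfin : μ Set.univ < ⊤)
    (r c : ℝ) (hr1 : 1 < r) (hr2 : r < 2) (hc : 0 < c) :
    ∃ α₁ : ℝ, 0 < α₁ ∧ ∃ α₂ : ℝ, 0 < α₂ ∧
      ∀ f : Ω → ℝ, Measurable f → (∀ x, 0 ≤ f x) →
        Integrable (fun x => f x ^ r) μ →
        ∀ S : ℝ, S = (∫ x, f x ^ r ∂μ) ^ ((1 : ℝ) / r) →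
          (∫ x, f x ^ 2 / (1 + c * f x ^ (2 - r)) ∂μ)
            ≥ α₁ * S ^ 2 / (1 + α₂ * S ^ (2 - r)) := by
  have : IsFiniteMeasure μ := ⟨hμfin⟩
  have : NeZero μ := ⟨Measure.measure_univ_pos.mp hμ0⟩
  have hM : 0 < μ.real univ := measureReal_univ_pos
  have hα₁ : 0 < μ.real univ ^ (1 - 2 / r) := Real.rpow_pos_of_pos hM _
  refine ⟨_, hα₁, c * μ.real univ ^ (1 - 2 / r), mul_pos hc hα₁, ?_⟩
  rintro f - hf₀ hfr S rfl
  have ha₁ : 1 ≤ 2 / r := by rw [le_div_iff₀ (by linarith)]; linarith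
  have ha₂ : 2 / r ≤ 2 := by rw [div_le_iff₀ (by linarith)]; linarith
  have jensen := measureReal_univ_mul_carreauPotential_le_integral ha₁ ha₂ hc hfr
    (ae_of_all _ fun x => Real.rpow_nonneg (hf₀ x) r)
  rw [mul_carreauPotential_div (by linarith) hM
    (integral_nonneg fun x => Real.rpow_nonneg (hf₀ x) r)] at jensen
  simpa only [carreauPotential_rpow (by linarith : r ≠ 0) (hf₀ _)] using jensen
end
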